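/- arXiv:1911.02906 — 4 statements merged into one kernel-verified Lean document; each statement's English description precedes it below -/
import Mathlib

section
/- Let θ > 0, α ∈ (1,2) and z ∈ ℝ with z ≥ −θ. Then the integral ∫₀^∞ (e^{−zu} − 1 + zu) u^{−(1+α)} e^{−θu} du is finite and equals Γ(−α) θ^α ((1 + z/θ)^α − 1 − α z/θ), where Γ denotes the real Gamma function extended to negative non-integer arguments via the recurrence Γ(s) = Γ(s+1)/s. -/
/-!
Put `φ₁ x = exp (-x) - 1` and `φ₂ x = exp (-x) - 1 + x`. On `(0, ∞)` the integrand equals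
`(φ₂ ((θ + z) u) - φ₂ (θ u) + z u φ₁ (θ u)) u ^ (-α - 1)`, so the integral splits into
compensated Gamma integrals `∫ φₙ (c u) u ^ (s - 1) du = Γ(s) c ^ (-s)`, `s ∈ (-n, 1 - n)`.
Since `φₙ' = -φₙ₋₁` (with `φ₀ = exp ∘ neg`), one integration by parts against `u ^ (s - 1)`
reduces the case `n` at `s` to the case `n - 1` at `s + 1`, and Euler's integral starts the
recursion; the bounds `|φ₁ x| ≤ min x 1` and `|φ₂ x| ≤ min (x ^ 2) x` on `x ≥ 0` give the
integrability and kill the boundary terms. Finally `Γ(1 - α) = -α Γ(-α)`.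
-/

open MeasureTheory Real Set Filter Topology

section RpowWeight

variable {g : ℝ → ℝ} {r m C : ℝ}

theorem abs_mul_rpow_le_of_abs_le {u : ℝ} (hu : 0 < u) (h : |g u| ≤ C * u ^ m) :
    |g u * u ^ r| ≤ C * u ^ (m + r) := by
  rw [abs_mul, abs_of_nonneg (rpow_nonneg hu.le r), rpow_add hu, ← mul_assoc]
  gcongr

theorem integrableOn_Ioi_mul_rpow_of_abs_le {n D : ℝ} (hg : Measurable g)
    (h0 : ∀ u ∈ Ioc (0 : ℝ) 1, |g u| ≤ C * u ^ m)
    (h1 : ∀ u ∈ Ioi (1 : ℝ), |g u| ≤ D * u ^ n)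
    (hm : -1 < m + r) (hn : n + r < -1) :
    IntegrableOn (fun u => g u * u ^ r) (Ioi 0) := by
  have hmeas : AEStronglyMeasurable (fun u => g u * u ^ r) volume := by fun_prop
  rw [← Ioc_union_Ioi_eq_Ioi zero_le_one]
  refine IntegrableOn.union ?_ ?_
  · refine Integrable.mono' ((intervalIntegral.intervalIntegrable_rpow' hm).1.const_mul C)
      hmeas.restrict ((ae_restrict_iff' measurableSet_Ioc).2 (ae_of_all _ fun u hu => ?_))
    exact abs_mul_rpow_le_of_abs_le hu.1 (h0 u hu)
  · refine Integrable.mono' ((integrableOn_Ioi_rpow_of_lt hn zero_lt_one).const_mul D)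
      hmeas.restrict ((ae_restrict_iff' measurableSet_Ioi).2 (ae_of_all _ fun u hu => ?_))
    exact abs_mul_rpow_le_of_abs_le (zero_lt_one.trans hu) (h1 u hu)

theorem tendsto_mul_rpow_nhdsGT_zero_of_abs_le (h0 : ∀ u ∈ Ioc (0 : ℝ) 1, |g u| ≤ C * u ^ m)
    (hm : 0 < m + r) : Tendsto (fun u => g u * u ^ r) (𝓝[>] 0) (𝓝 0) := by
  have hlim : Tendsto (fun u : ℝ => C * u ^ (m + r)) (𝓝[>] 0) (𝓝 0) := by
    have hcont := (continuousAt_rpow_const 0 _ (Or.inr hm.le)).tendsto.mono_left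
      (nhdsWithin_le_nhds (s := Ioi 0))
    simpa [zero_rpow hm.ne'] using hcont.const_mul C
  refine squeeze_zero_norm' ?_ hlim
  filter_upwards [Ioc_mem_nhdsGT zero_lt_one] with u hu
  exact abs_mul_rpow_le_of_abs_le hu.1 (h0 u hu)

theorem tendsto_mul_rpow_atTop_of_abs_le (h1 : ∀ u ∈ Ioi (1 : ℝ), |g u| ≤ C * u ^ m)
    (hm : m + r < 0) : Tendsto (fun u => g u * u ^ r) atTop (𝓝 0) := by
  have hlim : Tendsto (fun u : ℝ => C * u ^ (m + r)) atTop (𝓝 0) := by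
    simpa using (tendsto_rpow_neg_atTop (neg_pos.2 hm)).const_mul C
  refine squeeze_zero_norm' ?_ hlim
  filter_upwards [eventually_gt_atTop 1] with u hu
  exact abs_mul_rpow_le_of_abs_le (zero_lt_one.trans hu) (h1 u hu)

end RpowWeight

theorem integral_Ioi_mul_rpow_sub_one_eq_of_hasDerivAt {f f' : ℝ → ℝ} {s : ℝ} (hs : s ≠ 0)
    (hf : ∀ u ∈ Ioi (0 : ℝ), HasDerivAt f (f' u) u)
    (hint : IntegrableOn (fun u => f u * u ^ (s - 1)) (Ioi 0))
    (hint' : IntegrableOn (fun u => f' u * u ^ s) (Ioi 0))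
    (h0 : Tendsto (fun u => f u * u ^ s) (𝓝[>] 0) (𝓝 0))
    (htop : Tendsto (fun u => f u * u ^ s) atTop (𝓝 0)) :
    ∫ u in Ioi 0, f u * u ^ (s - 1) = -s⁻¹ * ∫ u in Ioi 0, f' u * u ^ s := by
  have hv : ∀ u ∈ Ioi (0 : ℝ), HasDerivAt (fun u => s⁻¹ * u ^ s) (u ^ (s - 1)) u :=
    fun u hu => ((hasDerivAt_rpow_const (Or.inl (ne_of_gt hu))).const_mul s⁻¹).congr_deriv
      (inv_mul_cancel_left₀ hs _)
  have hparts := integral_Ioi_mul_deriv_eq_deriv_mul hf hv hint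
    (by simpa only [IntegrableOn, Pi.mul_def, mul_left_comm] using hint'.const_mul s⁻¹)
    (by simpa only [Pi.mul_def, mul_left_comm] using h0.const_mul s⁻¹)
    (by simpa only [Pi.mul_def, mul_left_comm] using htop.const_mul s⁻¹)
  rw [hparts, ← integral_const_mul, mul_zero, sub_self, zero_sub, ← integral_neg]
  congr 1 with u
  ring

theorem abs_exp_neg_sub_one_le {x : ℝ} (hx : 0 ≤ x) : |exp (-x) - 1| ≤ x := by
  rw [abs_sub_comm, abs_of_nonneg (by simpa using hx)]
  linarith [one_sub_le_exp_neg x]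

theorem abs_exp_neg_sub_one_le_one {x : ℝ} (hx : 0 ≤ x) : |exp (-x) - 1| ≤ 1 := by
  rw [abs_sub_comm, abs_of_nonneg (by simpa using hx)]
  linarith [exp_pos (-x)]

theorem exp_neg_sub_one_add_nonneg (x : ℝ) : 0 ≤ exp (-x) - 1 + x := by
  linarith [one_sub_le_exp_neg x]

theorem exp_neg_sub_one_add_le {x : ℝ} : exp (-x) - 1 + x ≤ x * (1 - exp (-x)) := by
  have h := mul_le_mul_of_nonneg_right (add_one_le_exp x) (exp_pos (-x)).le
  rw [← exp_add, add_neg_cancel, exp_zero] at h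
  linarith

theorem abs_exp_neg_sub_one_add_le_sq {x : ℝ} (hx : 0 ≤ x) : |exp (-x) - 1 + x| ≤ x ^ 2 := by
  rw [abs_of_nonneg (exp_neg_sub_one_add_nonneg x), sq]
  refine exp_neg_sub_one_add_le.trans (mul_le_mul_of_nonneg_left ?_ hx)
  linarith [one_sub_le_exp_neg x]

theorem abs_exp_neg_sub_one_add_le {x : ℝ} (hx : 0 ≤ x) : |exp (-x) - 1 + x| ≤ x := by
  rw [abs_of_nonneg (exp_neg_sub_one_add_nonneg x)]
  refine exp_neg_sub_one_add_le.trans (mul_le_of_le_one_right hx ?_)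
  linarith [exp_pos (-x)]

theorem integrableOn_rpow_mul_exp_neg_mul {c s : ℝ} (hc : 0 < c) (hs : -1 < s) :
    IntegrableOn (fun u => u ^ s * exp (-(c * u))) (Ioi 0) := by
  simpa using integrableOn_rpow_mul_exp_neg_mul_rpow hs one_pos hc

theorem integral_rpow_mul_exp_neg_mul_Ioi_of_neg_one_lt {c s : ℝ} (hc : 0 < c) (hs : -1 < s) :
    ∫ u in Ioi 0, u ^ s * exp (-(c * u)) = Gamma (s + 1) * c ^ (-(s + 1)) := by
  rw [← add_sub_cancel_right s 1, integral_rpow_mul_exp_neg_mul_Ioi (by linarith) hc,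
    add_sub_cancel_right, one_div, inv_rpow hc.le, ← rpow_neg hc.le, mul_comm]

theorem mul_Gamma_add_one_mul_rpow_neg {c s : ℝ} (hc : 0 < c) (hs : s ≠ 0) :
    c * (Gamma (s + 1) * c ^ (-(s + 1))) = s * (Gamma s * c ^ (-s)) := by
  rw [Gamma_add_one hs, neg_add, rpow_add hc, rpow_neg_one]
  field_simp

theorem hasDerivAt_exp_neg_mul_sub_one (c u : ℝ) :
    HasDerivAt (fun u => exp (-(c * u)) - 1) (-c * exp (-(c * u))) u := by
  simpa [mul_comm] using (((hasDerivAt_id u).const_mul c).neg.exp).sub_const 1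

theorem hasDerivAt_exp_neg_mul_sub_one_add_mul (c u : ℝ) :
    HasDerivAt (fun u => exp (-(c * u)) - 1 + c * u) (-c * (exp (-(c * u)) - 1)) u :=
  ((hasDerivAt_exp_neg_mul_sub_one c u).add ((hasDerivAt_id u).const_mul c)).congr_deriv
    (by ring)

section CompensatedExp

variable {c s : ℝ}

theorem abs_exp_neg_mul_sub_one_le (hc : 0 ≤ c) {u : ℝ} (hu : 0 ≤ u) :
    |exp (-(c * u)) - 1| ≤ c * u ^ (1 : ℝ) := by
  simpa using abs_exp_neg_sub_one_le (mul_nonneg hc hu)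

theorem abs_exp_neg_mul_sub_one_le_one (hc : 0 ≤ c) {u : ℝ} (hu : 0 ≤ u) :
    |exp (-(c * u)) - 1| ≤ 1 * u ^ (0 : ℝ) := by
  simpa using abs_exp_neg_sub_one_le_one (mul_nonneg hc hu)

theorem integrableOn_exp_neg_mul_sub_one_mul_rpow (hc : 0 ≤ c) (hs : s ∈ Ioo (-1 : ℝ) 0) :
    IntegrableOn (fun u => (exp (-(c * u)) - 1) * u ^ (s - 1)) (Ioi 0) :=
  integrableOn_Ioi_mul_rpow_of_abs_le (by fun_prop)
    (fun _ hu => abs_exp_neg_mul_sub_one_le hc hu.1.le)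
    (fun _ hu => abs_exp_neg_mul_sub_one_le_one hc (zero_le_one.trans hu.le))
    (by linarith [hs.1]) (by linarith [hs.2])

theorem integral_exp_neg_mul_sub_one_mul_rpow (hc : 0 ≤ c) (hs : s ∈ Ioo (-1 : ℝ) 0) :
    ∫ u in Ioi 0, (exp (-(c * u)) - 1) * u ^ (s - 1) = Gamma s * c ^ (-s) := by
  rcases hc.eq_or_lt with rfl | hc
  · simp [zero_rpow (neg_ne_zero.2 hs.2.ne)]
  have hibp := integral_Ioi_mul_rpow_sub_one_eq_of_hasDerivAt hs.2.ne
    (fun u _ => hasDerivAt_exp_neg_mul_sub_one c u)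
    (integrableOn_exp_neg_mul_sub_one_mul_rpow hc.le hs)
    (IntegrableOn.congr_fun ((integrableOn_rpow_mul_exp_neg_mul hc hs.1).const_mul (-c))
      (fun u _ => by ring) measurableSet_Ioi)
    (tendsto_mul_rpow_nhdsGT_zero_of_abs_le
      (fun _ hu => abs_exp_neg_mul_sub_one_le hc.le hu.1.le) (by linarith [hs.1]))
    (tendsto_mul_rpow_atTop_of_abs_le
      (fun _ hu => abs_exp_neg_mul_sub_one_le_one hc.le (zero_le_one.trans hu.le))
      (by linarith [hs.2]))
  have hEuler : ∫ u in Ioi 0, -c * exp (-(c * u)) * u ^ s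
      = -c * (Gamma (s + 1) * c ^ (-(s + 1))) := by
    rw [← integral_rpow_mul_exp_neg_mul_Ioi_of_neg_one_lt hc hs.1, ← integral_const_mul]
    congr 1 with u
    ring
  rw [hibp, hEuler, neg_mul, neg_mul, mul_neg, neg_neg, mul_Gamma_add_one_mul_rpow_neg hc hs.2.ne,
    inv_mul_cancel_left₀ hs.2.ne]

theorem abs_exp_neg_mul_sub_one_add_mul_le_sq (hc : 0 ≤ c) {u : ℝ} (hu : 0 ≤ u) :
    |exp (-(c * u)) - 1 + c * u| ≤ c ^ 2 * u ^ (2 : ℝ) := by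
  simpa [mul_pow] using abs_exp_neg_sub_one_add_le_sq (mul_nonneg hc hu)

theorem abs_exp_neg_mul_sub_one_add_mul_le (hc : 0 ≤ c) {u : ℝ} (hu : 0 ≤ u) :
    |exp (-(c * u)) - 1 + c * u| ≤ c * u ^ (1 : ℝ) := by
  simpa using abs_exp_neg_sub_one_add_le (mul_nonneg hc hu)

theorem integrableOn_exp_neg_mul_sub_one_add_mul_mul_rpow (hc : 0 ≤ c)
    (hs : s ∈ Ioo (-2 : ℝ) (-1)) :
    IntegrableOn (fun u => (exp (-(c * u)) - 1 + c * u) * u ^ (s - 1)) (Ioi 0) :=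
  integrableOn_Ioi_mul_rpow_of_abs_le (by fun_prop)
    (fun _ hu => abs_exp_neg_mul_sub_one_add_mul_le_sq hc hu.1.le)
    (fun _ hu => abs_exp_neg_mul_sub_one_add_mul_le hc (zero_le_one.trans hu.le))
    (by linarith [hs.1]) (by linarith [hs.2])

theorem integral_exp_neg_mul_sub_one_add_mul_mul_rpow (hc : 0 ≤ c)
    (hs : s ∈ Ioo (-2 : ℝ) (-1)) :
    ∫ u in Ioi 0, (exp (-(c * u)) - 1 + c * u) * u ^ (s - 1) = Gamma s * c ^ (-s) := by
  have hs0 : s ≠ 0 := (hs.2.trans neg_one_lt_zero).ne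
  rcases hc.eq_or_lt with rfl | hc
  · simp [zero_rpow (neg_ne_zero.2 hs0)]
  have hs1 : s + 1 ∈ Ioo (-1 : ℝ) 0 := ⟨by linarith [hs.1], by linarith [hs.2]⟩
  have hpow : ∀ u : ℝ, u ^ s = u ^ (s + 1 - 1) := fun u => by rw [add_sub_cancel_right]
  have hibp := integral_Ioi_mul_rpow_sub_one_eq_of_hasDerivAt hs0
    (fun u _ => hasDerivAt_exp_neg_mul_sub_one_add_mul c u)
    (integrableOn_exp_neg_mul_sub_one_add_mul_mul_rpow hc.le hs)
    (IntegrableOn.congr_fun ((integrableOn_exp_neg_mul_sub_one_mul_rpow hc.le hs1).const_mul (-c))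
      (fun u _ => by rw [hpow]; ring) measurableSet_Ioi)
    (tendsto_mul_rpow_nhdsGT_zero_of_abs_le
      (fun _ hu => abs_exp_neg_mul_sub_one_add_mul_le_sq hc.le hu.1.le) (by linarith [hs.1]))
    (tendsto_mul_rpow_atTop_of_abs_le
      (fun _ hu => abs_exp_neg_mul_sub_one_add_mul_le hc.le (zero_le_one.trans hu.le))
      (by linarith [hs.2]))
  have hprev : ∫ u in Ioi 0, -c * (exp (-(c * u)) - 1) * u ^ s
      = -c * (Gamma (s + 1) * c ^ (-(s + 1))) := by
    simp_rw [mul_assoc, hpow]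
    rw [integral_const_mul, integral_exp_neg_mul_sub_one_mul_rpow hc.le hs1]
  rw [hibp, hprev, neg_mul, neg_mul, mul_neg, neg_neg, mul_Gamma_add_one_mul_rpow_neg hc hs0,
    inv_mul_cancel_left₀ hs0]

end CompensatedExp

theorem jump_integrand_eq_compensated (θ α z : ℝ) {u : ℝ} (hu : 0 < u) :
    (exp (-z * u) - 1 + z * u) * u ^ (-(1 + α)) * exp (-θ * u)
      = (exp (-((θ + z) * u)) - 1 + (θ + z) * u) * u ^ (-α - 1)
        - (exp (-(θ * u)) - 1 + θ * u) * u ^ (-α - 1)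
        + z * ((exp (-(θ * u)) - 1) * u ^ (1 - α - 1)) := by
  have hpow : u ^ (1 - α - 1) = u * u ^ (-α - 1) := by
    rw [show 1 - α - 1 = -α - 1 + 1 by ring, rpow_add_one hu.ne']
    ring
  have hexp : exp (-((θ + z) * u)) = exp (-(z * u)) * exp (-(θ * u)) := by
    rw [← exp_add]
    ring_nf
  simp only [hpow, hexp, neg_mul, show -(1 + α) = -α - 1 by ring]
  ring


/-- Closed-form evaluation of the tempered α-stable jump integral. -/
theorem stmt_0 (θ α z : ℝ) (hθ : 0 < θ) (hα : α ∈ Set.Ioo (1:ℝ) 2) (hz : -θ ≤ z) :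
    IntegrableOn
      (fun u : ℝ => (Real.exp (-z * u) - 1 + z * u) * u ^ (-(1 + α)) * Real.exp (-θ * u))
      (Set.Ioi 0) ∧
    (∫ u in Set.Ioi (0:ℝ),
        (Real.exp (-z * u) - 1 + z * u) * u ^ (-(1 + α)) * Real.exp (-θ * u))
      = Real.Gamma (-α) * θ ^ α * ((1 + z / θ) ^ α - 1 - α * (z / θ)) := by
  have hθz : 0 ≤ θ + z := by linarith
  have hs₂ : -α ∈ Ioo (-2 : ℝ) (-1) := ⟨by linarith [hα.2], by linarith [hα.1]⟩
  have hs₁ : 1 - α ∈ Ioo (-1 : ℝ) 0 := ⟨by linarith [hα.2], by linarith [hα.1]⟩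
  have hsplit := fun u (hu : u ∈ Ioi (0 : ℝ)) => (jump_integrand_eq_compensated θ α z hu).symm
  have hint_a := integrableOn_exp_neg_mul_sub_one_add_mul_mul_rpow hθz hs₂
  have hint_θ := integrableOn_exp_neg_mul_sub_one_add_mul_mul_rpow hθ.le hs₂
  have hint_z := (integrableOn_exp_neg_mul_sub_one_mul_rpow hθ.le hs₁).const_mul z
  refine ⟨IntegrableOn.congr_fun ((hint_a.sub hint_θ).add hint_z) hsplit measurableSet_Ioi, ?_⟩
  rw [← setIntegral_congr_fun measurableSet_Ioi hsplit, integral_add ?_ hint_z,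
    integral_sub hint_a hint_θ,
    integral_const_mul, integral_exp_neg_mul_sub_one_add_mul_mul_rpow hθz hs₂,
    integral_exp_neg_mul_sub_one_add_mul_mul_rpow hθ.le hs₂,
    integral_exp_neg_mul_sub_one_mul_rpow hθ.le hs₁]
  · have hΓ : Gamma (1 - α) = -α * Gamma (-α) := by
      rw [sub_eq_neg_add, Gamma_add_one (by linarith [hα.1])]
    rw [hΓ, neg_neg, neg_sub, rpow_sub_one hθ.ne', add_div' _ _ _ hθ.ne', one_mul,
      div_rpow hθz hθ.le]
    field_simp
    ring
  · exact hint_a.sub hint_θ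
end

section
/- Let θ > 0, α ∈ (1,2) and z ∈ ℝ with |z| < θ. Then ∫₀^∞ (e^{−zu} − 1 + zu) u^{−(1+α)} e^{−θu} du = Σ_{n=2}^∞ ((−z)^n / n!) Γ(n − α) θ^{α−n}, where the series on the right-hand side converges absolutely. -/
/-!
Expand `exp (x u)` minus its Taylor polynomial of degree `< m` into its power series and integrate
termwise against `u ^ (s - 1) * exp (-θ u)`: the `n`-th term becomes the Gamma integral
`∫ u ^ (n + s - 1) exp (-θ u) = Γ(n + s) θ ^ (-(n + s))`, which converges because removing the
first `m` terms leaves only `n ≥ m > -s` (for the theorem, `m = 2 > α = -s`). Termwise integration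
is justified by the summability of the integrals of the absolute values, which is a ratio test:
consecutive terms have ratio `|x| / θ * (n + s) / (n + 1) → |x| / θ < 1`.
-/

open MeasureTheory Real Set

open Filter Topology Finset
open scoped Nat

/-- The `n`-th term of `∫ u in Ioi 0, u ^ (s - 1) * exp (x * u) * exp (-θ * u)` expanded in
powers of `x`. -/
noncomputable def expGammaTerm (θ s x : ℝ) (n : ℕ) : ℝ :=
  x ^ n / n ! * Gamma (n + s) * θ ^ (-(n + s))

lemma norm_expGammaTerm_succ {θ s x : ℝ} (hθ : 0 < θ) {n : ℕ} (hn : 0 < (n : ℝ) + s) :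
    ‖expGammaTerm θ s x (n + 1)‖ = |x| / θ * ((n + s) / (n + 1)) * ‖expGammaTerm θ s x n‖ := by
  have hΓ : Gamma ((n + 1 : ℕ) + s) = (n + s) * Gamma (n + s) := by
    rw [Nat.cast_succ, add_right_comm, Gamma_add_one hn.ne']
  have hθpow : θ ^ (-((n + 1 : ℕ) + s)) = θ ^ (-(n + s)) / θ := by
    rw [Nat.cast_succ, show -((n : ℝ) + 1 + s) = -(n + s) - 1 by ring, rpow_sub_one hθ.ne']
  simp only [expGammaTerm, hΓ, hθpow, Nat.factorial_succ, norm_mul, norm_div, norm_pow,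
    Real.norm_eq_abs, abs_of_pos hθ, abs_of_pos hn, Nat.abs_cast]
  push_cast
  field_simp
  ring

lemma summable_norm_expGammaTerm {θ x : ℝ} (s : ℝ) (hx : |x| < θ) :
    Summable fun n => ‖expGammaTerm θ s x n‖ := by
  have hθ : 0 < θ := (abs_nonneg x).trans_lt hx
  obtain ⟨r, hxr, hr1⟩ := exists_between ((div_lt_one hθ).mpr hx)
  have hratio : Tendsto (fun n : ℕ => |x| / θ * ((n + s) / (n + 1))) atTop (𝓝 (|x| / θ)) := by
    simpa [add_comm, mul_comm] using
      (tendsto_add_mul_div_add_mul_atTop_nhds s 1 (1 : ℝ) one_ne_zero).const_mul (|x| / θ)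
  refine summable_of_ratio_norm_eventually_le hr1 ?_
  filter_upwards [hratio.eventually (gt_mem_nhds hxr),
    eventually_gt_atTop ⌈-s⌉₊] with n hn hns
  have hpos : 0 < (n : ℝ) + s := by
    have := Nat.lt_of_ceil_lt hns
    linarith
  rw [norm_norm, norm_norm, norm_expGammaTerm_succ hθ hpos]
  exact mul_le_mul_of_nonneg_right hn.le (norm_nonneg _)

lemma norm_expGammaTerm {θ s x : ℝ} (hθ : 0 < θ) {n : ℕ} (hn : 0 < (n : ℝ) + s) :
    ‖expGammaTerm θ s x n‖ = expGammaTerm θ s |x| n := by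
  simp only [expGammaTerm, norm_mul, norm_div, norm_pow, Real.norm_eq_abs, Nat.abs_cast,
    abs_of_pos (Gamma_pos_of_pos hn), abs_of_pos (rpow_pos_of_pos hθ _)]

lemma integral_pow_div_factorial_mul_rpow_mul_exp {θ s : ℝ} (x : ℝ) (hθ : 0 < θ) {n : ℕ}
    (hn : 0 < (n : ℝ) + s) :
    ∫ u in Ioi 0, x ^ n / n ! * (u ^ ((n : ℝ) + s - 1) * exp (-(θ * u))) =
      expGammaTerm θ s x n := by
  rw [integral_const_mul, integral_rpow_mul_exp_neg_mul_Ioi hn hθ, one_div,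
    inv_rpow hθ.le, ← rpow_neg hθ.le, expGammaTerm]
  ring

lemma hasSum_pow_div_factorial_add (x : ℝ) (m : ℕ) :
    HasSum (fun n => x ^ (n + m) / (n + m)!) (exp x - ∑ i ∈ range m, x ^ i / i !) := by
  refine (hasSum_nat_add_iff' m (f := fun n => x ^ n / n !)).mpr ?_
  rw [exp_eq_exp_ℝ]
  exact NormedSpace.expSeries_div_hasSum_exp x

theorem integral_exp_sub_taylor_mul_rpow_mul_exp {θ s x : ℝ} (m : ℕ) (hms : 0 < m + s)
    (hx : |x| < θ) :
    ∫ u in Ioi 0, (exp (x * u) - ∑ i ∈ range m, (x * u) ^ i / i !) * u ^ (s - 1) * exp (-θ * u) =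
      ∑' n, expGammaTerm θ s x (n + m) := by
  have hθ : 0 < θ := (abs_nonneg x).trans_lt hx
  set F : ℕ → ℝ → ℝ := fun n u =>
    x ^ (n + m) / (n + m)! * (u ^ (((n + m : ℕ) : ℝ) + s - 1) * exp (-(θ * u)))
  have hpos (n : ℕ) : 0 < ((n + m : ℕ) : ℝ) + s := by
    push_cast
    linarith [n.cast_nonneg (α := ℝ)]
  have hint (n : ℕ) : IntegrableOn (F n) (Ioi 0) := by
    have : IntegrableOn (fun u => u ^ (((n + m : ℕ) : ℝ) + s - 1) * exp (-(θ * u))) (Ioi 0) := by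
      simpa [rpow_one] using integrableOn_rpow_mul_exp_neg_mul_rpow (p := 1)
        (by linarith [hpos n]) zero_lt_one hθ
    exact this.const_mul _
  have hnorm (n : ℕ) : ∫ u in Ioi 0, ‖F n u‖ = ‖expGammaTerm θ s x (n + m)‖ := by
    rw [norm_expGammaTerm hθ (hpos n), ← integral_pow_div_factorial_mul_rpow_mul_exp _ hθ (hpos n)]
    refine setIntegral_congr_fun measurableSet_Ioi fun u hu => ?_
    simp only [F, norm_mul, norm_div, norm_pow, Real.norm_eq_abs, Nat.abs_cast,
      abs_of_pos (rpow_pos_of_pos hu _), abs_of_pos (exp_pos _)]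
  have hsum : Summable fun n => ∫ u in Ioi 0, ‖F n u‖ := by
    simp only [hnorm]
    exact (summable_nat_add_iff m).mpr (summable_norm_expGammaTerm s hx)
  have hexpand : ∀ u ∈ Ioi (0 : ℝ),
      (exp (x * u) - ∑ i ∈ range m, (x * u) ^ i / i !) * u ^ (s - 1) * exp (-θ * u) =
        ∑' n, F n u := by
    intro u hu
    have hF (n : ℕ) : F n u = (x * u) ^ (n + m) / (n + m)! * (u ^ (s - 1) * exp (-θ * u)) := by
      simp only [F]
      rw [add_sub_assoc, rpow_add hu, rpow_natCast, neg_mul]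
      ring
    rw [tsum_congr hF, tsum_mul_right, (hasSum_pow_div_factorial_add _ m).tsum_eq]
    ring
  calc _ = ∫ u in Ioi 0, ∑' n, F n u := setIntegral_congr_fun measurableSet_Ioi hexpand
    _ = ∑' n, ∫ u in Ioi 0, F n u := (integral_tsum_of_summable_integral_norm hint hsum).symm
    _ = _ := tsum_congr fun n => integral_pow_div_factorial_mul_rpow_mul_exp _ hθ (hpos n)

theorem stmt_1_general (θ α z : ℝ) (hα : α ∈ Set.Ioo (1:ℝ) 2) (hz : |z| < θ) :
    Summable (fun n : ℕ =>
      |(-z) ^ (n + 2) / (Nat.factorial (n + 2) : ℝ) * Real.Gamma (((n : ℝ) + 2) - α) *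
        θ ^ (α - ((n : ℝ) + 2))|) ∧
    (∫ u in Set.Ioi (0:ℝ),
        (Real.exp (-z * u) - 1 + z * u) * u ^ (-(1 + α)) * Real.exp (-θ * u))
      = ∑' n : ℕ, (-z) ^ (n + 2) / (Nat.factorial (n + 2) : ℝ) *
          Real.Gamma (((n : ℝ) + 2) - α) * θ ^ (α - ((n : ℝ) + 2)) := by
  have hterm (n : ℕ) : (-z) ^ (n + 2) / (Nat.factorial (n + 2) : ℝ) * Gamma ((n : ℝ) + 2 - α) *
      θ ^ (α - ((n : ℝ) + 2)) = expGammaTerm θ (-α) (-z) (n + 2) := by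
    simp only [expGammaTerm]
    push_cast
    ring_nf
  have hz_neg : |-z| < θ := by rwa [abs_neg]
  simp only [hterm, ← Real.norm_eq_abs]
  refine ⟨(summable_nat_add_iff 2).mpr (summable_norm_expGammaTerm (-α) hz_neg), ?_⟩
  rw [← integral_exp_sub_taylor_mul_rpow_mul_exp 2 (by push_cast; linarith [hα.2]) hz_neg]
  refine setIntegral_congr_fun measurableSet_Ioi fun u _ => ?_
  simp only [sum_range_succ, sum_range_zero]
  ring_nf

/-- Series expansion of the tempered α-stable jump integral for |z| < θ. -/
theorem stmt_1 (θ α z : ℝ) (hθ : 0 < θ) (hα : α ∈ Set.Ioo (1:ℝ) 2) (hz : |z| < θ) :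
    Summable (fun n : ℕ =>
      |(-z) ^ (n + 2) / (Nat.factorial (n + 2) : ℝ) * Real.Gamma (((n : ℝ) + 2) - α) *
        θ ^ (α - ((n : ℝ) + 2))|) ∧
    (∫ u in Set.Ioi (0:ℝ),
        (Real.exp (-z * u) - 1 + z * u) * u ^ (-(1 + α)) * Real.exp (-θ * u))
      = ∑' n : ℕ, (-z) ^ (n + 2) / (Nat.factorial (n + 2) : ℝ) *
          Real.Gamma (((n : ℝ) + 2) - α) * θ ^ (α - ((n : ℝ) + 2)) :=
  stmt_1_general θ α z hα hz
end

section
/- Let L ∈ ℝ with L ≤ 0 and let φ : [L, ∞) → ℝ be convex, continuously differentiable and satisfy φ(0) = 0. Fix q ≥ 0 and set p_q := inf{ y ∈ [L, ∞) : φ(y) ≤ q } (this set contains 0, so p_q ∈ [L, 0] and φ(p_q) ≤ q by continuity). Then for every p ≥ p_q there exists a unique global solution v : [0, ∞) → [p_q, ∞) of the generalized Riccati ODE v′(t) = q − φ(v(t)) with v(0) = p; in particular the solution never exits [L, ∞). -/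
/-
Uniqueness: `φ` is `C¹`, hence locally Lipschitz on `[L, ∞)`, and solutions stay in
`[p_q, ∞) ⊆ [L, ∞)`, so Grönwall's inequality applies on every compact time interval.

Existence: the equation is scalar and autonomous, so wherever `q - φ` has a constant sign it is
solved by separation of variables, `t = ∫_p^{v t} dy / (q - φ y)`. If `φ p = q` the solution is
constant. If `φ p < q`, the solution increases, either towards the first zero `b > p` of
`q - φ`, which it never reaches because convexity gives `q - φ y ≤ φ'(b) (b - y)`, or, if there
is no such zero, towards `+∞` without blowing up, because the tangent line at `p` bounds
`q - φ` linearly. If `φ p > q`, the solution decreases towards the last zero `b < p` of `q - φ`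
(which exists because `φ p_q ≤ q`), again not reached in finite time by the secant bound
`φ y - q ≤ φ'(p) (y - b)`.
-/

open Real Set Filter Topology

theorem ConvexOn.add_mul_sub_le_of_hasDerivWithinAt {S : Set ℝ} {f : ℝ → ℝ} {x y f' : ℝ}
    (hf : ConvexOn ℝ S f) (hx : x ∈ S) (hy : y ∈ S) (hf' : HasDerivWithinAt f f' S x) :
    f x + f' * (y - x) ≤ f y := by
  rcases lt_trichotomy x y with hxy | rfl | hyx
  · have := hf.le_slope_of_hasDerivWithinAt hx hy hxy hf'
    rw [slope_def_field, le_div_iff₀ (sub_pos.2 hxy)] at this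
    linarith
  · simp
  · have := hf.slope_le_of_hasDerivWithinAt hy hx hyx hf'
    rw [slope_def_field, div_le_iff₀ (sub_pos.2 hyx)] at this
    linarith

theorem ContinuousOn.exists_first_eq {f : ℝ → ℝ} {a c y : ℝ} (hf : ContinuousOn f (Icc a c))
    (ha : f a < y) (hc : y ≤ f c) (hac : a ≤ c) :
    ∃ b ∈ Ioc a c, f b = y ∧ ∀ x ∈ Ico a b, f x < y := by
  set S := Icc a c ∩ f ⁻¹' Ici y
  have hS : IsClosed S := hf.preimage_isClosed_of_isClosed isClosed_Icc isClosed_Ici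
  have hbdd : BddBelow S := ⟨a, fun x hx => hx.1.1⟩
  have hbS : sInf S ∈ S := hS.csInf_mem ⟨c, ⟨hac, le_rfl⟩, hc⟩ hbdd
  have hbefore : ∀ x ∈ Ico a (sInf S), f x < y := fun x hx => lt_of_not_ge fun hfx =>
    (csInf_le hbdd ⟨⟨hx.1, hx.2.le.trans hbS.1.2⟩, hfx⟩).not_gt hx.2
  have hab : a < sInf S := lt_of_le_of_ne hbS.1.1 fun h => (h ▸ ha).not_ge hbS.2
  obtain ⟨z, hz, hfz⟩ := intermediate_value_Icc hab.le (hf.mono (Icc_subset_Icc_right hbS.1.2))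
    (show y ∈ Icc _ _ from ⟨ha.le, hbS.2⟩)
  have hzb : z = sInf S := le_antisymm hz.2 <| by
    by_contra! h
    exact (hbefore z ⟨hz.1, h⟩).ne hfz
  exact ⟨sInf S, ⟨hab, hbS.1.2⟩, hzb ▸ hfz, hbefore⟩

theorem ContinuousOn.exists_last_eq {f : ℝ → ℝ} {a c y : ℝ} (hf : ContinuousOn f (Icc a c))
    (ha : f a ≤ y) (hc : y < f c) (hac : a ≤ c) :
    ∃ b ∈ Ico a c, f b = y ∧ ∀ x ∈ Ioc b c, y < f x := by
  set S := Icc a c ∩ f ⁻¹' Iic y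
  have hS : IsClosed S := hf.preimage_isClosed_of_isClosed isClosed_Icc isClosed_Iic
  have hbdd : BddAbove S := ⟨c, fun x hx => hx.1.2⟩
  have hbS : sSup S ∈ S := hS.csSup_mem ⟨a, ⟨le_rfl, hac⟩, ha⟩ hbdd
  have hafter : ∀ x ∈ Ioc (sSup S) c, y < f x := fun x hx => lt_of_not_ge fun hfx =>
    (le_csSup hbdd ⟨⟨hbS.1.1.trans hx.1.le, hx.2⟩, hfx⟩).not_gt hx.1
  have hbc : sSup S < c := lt_of_le_of_ne hbS.1.2 fun h => (h ▸ hc).not_ge hbS.2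
  obtain ⟨z, hz, hfz⟩ := intermediate_value_Icc hbc.le (hf.mono (Icc_subset_Icc_left hbS.1.1))
    (show y ∈ Icc _ _ from ⟨hbS.2, hc.le⟩)
  have hzb : z = sSup S := le_antisymm (by
    by_contra! h
    exact (hafter z ⟨h, hz.2⟩).ne' hfz) hz.1
  exact ⟨sSup S, ⟨hbS.1.1, hbc⟩, hzb ▸ hfz, hafter⟩

theorem exists_hasDerivAt_of_tendsto_integral_inv {G : ℝ → ℝ} (hG : Continuous G)
    (hpos : ∀ y, 0 < G y) (p : ℝ)
    (htop : Tendsto (fun x => ∫ s in p..x, (G s)⁻¹) atTop atTop)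
    (hbot : Tendsto (fun x => ∫ s in p..x, (G s)⁻¹) atBot atBot) :
    ∃ v : ℝ → ℝ, v 0 = p ∧ Monotone v ∧ ∀ t, HasDerivAt v (G (v t)) t := by
  set T : ℝ → ℝ := fun x => ∫ s in p..x, (G s)⁻¹
  have hT' : ∀ x, HasDerivAt T (G x)⁻¹ x := fun x =>
    ((hG.inv₀ fun y => (hpos y).ne').integral_hasStrictDerivAt p x).hasDerivAt
  have hTmono : StrictMono T :=
    strictMono_of_hasDerivAt_pos hT' fun x => inv_pos.2 (hpos x)
  let e : ℝ ≃o ℝ := hTmono.orderIsoOfSurjective T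
    ((continuous_iff_continuousAt.2 fun x => (hT' x).continuousAt).surjective htop hbot)
  refine ⟨e.symm, e.injective ?_, e.symm.monotone, fun t => ?_⟩
  · simp [e, T]
  simpa using HasDerivAt.of_local_left_inverse e.symm.continuous.continuousAt (hT' (e.symm t))
    (inv_pos.2 (hpos _)).ne' (Eventually.of_forall e.apply_symm_apply)

theorem integral_inv_sub_add_one {p x : ℝ} (hx : p ≤ x) :
    ∫ s in p..x, (s - p + 1)⁻¹ = log (x - p + 1) := by
  have := intervalIntegral.integral_comp_add_right (fun u : ℝ => u⁻¹) (1 - p) (a := p) (b := x)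
  rw [show (fun s => (s - p + 1)⁻¹) = fun s : ℝ => (s + (1 - p))⁻¹ by ext; ring_nf, this,
    integral_inv_of_pos (by linarith) (by linarith)]
  ring_nf

theorem tendsto_integral_inv_atTop_of_le_linear {G : ℝ → ℝ} (hG : Continuous G)
    (hpos : ∀ y, 0 < G y) {p C : ℝ} (hle : ∀ y, p ≤ y → G y ≤ C * (y - p + 1)) :
    Tendsto (fun x => ∫ s in p..x, (G s)⁻¹) atTop atTop := by
  have hC : 0 < C := by simpa using (hpos p).trans_le (hle p le_rfl)
  have hlog : Tendsto (fun x => C⁻¹ * log (x - p + 1)) atTop atTop :=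
    (tendsto_log_atTop.comp (tendsto_atTop_add_const_right _ 1
      (tendsto_atTop_add_const_right _ (-p) tendsto_id))).const_mul_atTop (inv_pos.2 hC)
  refine tendsto_atTop_mono' _ ?_ hlog
  filter_upwards [eventually_ge_atTop p] with x hx
  rw [← integral_inv_sub_add_one hx, ← intervalIntegral.integral_const_mul]
  refine intervalIntegral.integral_mono_on hx ?_ ?_ fun s hs => ?_
  · refine ContinuousOn.intervalIntegrable
      (continuousOn_const.mul (ContinuousOn.inv₀ (by fun_prop) fun s hs => ?_))
    rw [uIcc_of_le hx] at hs
    exact (by linarith [hs.1] : 0 < s - p + 1).ne'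
  · exact (hG.inv₀ fun y => (hpos y).ne').intervalIntegrable _ _
  · rw [← mul_inv]
    exact inv_anti₀ (hpos s) (hle s hs.1)

theorem exists_hasDerivAt_of_pos_of_le_linear {g : ℝ → ℝ} {p C : ℝ} (hg : ContinuousOn g (Ici p))
    (hpos : ∀ y, p ≤ y → 0 < g y) (hle : ∀ y, p ≤ y → g y ≤ C * (y - p + 1)) :
    ∃ v : ℝ → ℝ, v 0 = p ∧ ∀ t, 0 ≤ t → p ≤ v t ∧ HasDerivAt v (g (v t)) t := by
  set G : ℝ → ℝ := fun y => g (max y p)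
  have hG : Continuous G :=
    hg.comp_continuous (continuous_id.max continuous_const) fun y => le_max_right y p
  have hGpos : ∀ y, 0 < G y := fun y => hpos _ (le_max_right y p)
  have hGeq : ∀ y, p ≤ y → G y = g y := fun y hy => by simp only [G, max_eq_left hy]
  have hbot : Tendsto (fun x => ∫ s in p..x, (G s)⁻¹) atBot atBot := by
    refine ((tendsto_atBot_add_const_right _ (-p) tendsto_id).atBot_mul_const
      (inv_pos.2 (hGpos p))).congr' ?_
    filter_upwards [eventually_le_atBot p] with x hx
    rw [id, ← sub_eq_add_neg, ← smul_eq_mul, ← intervalIntegral.integral_const]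
    refine intervalIntegral.integral_congr fun s hs => ?_
    rw [uIcc_of_ge hx] at hs
    simp only [G, max_eq_right hs.2, max_self]
  have htop := tendsto_integral_inv_atTop_of_le_linear hG hGpos fun y hy => hGeq y hy ▸ hle y hy
  obtain ⟨v, hv0, hvmono, hv⟩ := exists_hasDerivAt_of_tendsto_integral_inv hG hGpos p htop hbot
  refine ⟨v, hv0, fun t ht => ?_⟩
  have hpv : p ≤ v t := hv0 ▸ hvmono ht
  exact ⟨hpv, hGeq _ hpv ▸ hv t⟩

theorem exists_hasDerivAt_of_pos_of_le_mul_sub {G : ℝ → ℝ} {x₀ b K : ℝ} (hxb : x₀ < b)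
    (hG : ContinuousOn G (Ico x₀ b)) (hpos : ∀ y ∈ Ico x₀ b, 0 < G y)
    (hle : ∀ y ∈ Ico x₀ b, G y ≤ K * (b - y)) :
    ∃ w : ℝ → ℝ, w 0 = x₀ ∧ ∀ t, 0 ≤ t → w t ∈ Ico x₀ b ∧ HasDerivAt w (G (w t)) t := by
  have hK : 0 < K := pos_of_mul_pos_left ((hpos x₀ ⟨le_rfl, hxb⟩).trans_le
    (hle x₀ ⟨le_rfl, hxb⟩)) (by linarith)
  -- `y = b - exp (-u)` pushes `b` to `u = ∞` and turns the linear vanishing of `G` at `b` into a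
  -- bounded rate `g` for `u`.
  set u₀ := -log (b - x₀)
  have hexp₀ : exp (-u₀) = b - x₀ := by rw [neg_neg, exp_log (by linarith)]
  have hmaps : MapsTo (fun u => b - exp (-u)) (Ici u₀) (Ico x₀ b) := fun u hu =>
    ⟨by linarith [hexp₀ ▸ exp_le_exp.2 (neg_le_neg (mem_Ici.1 hu))], by linarith [exp_pos (-u)]⟩
  set g : ℝ → ℝ := fun u => exp u * G (b - exp (-u))
  have hg : ContinuousOn g (Ici u₀) :=
    continuous_exp.continuousOn.mul (hG.comp (by fun_prop) hmaps)
  have hgpos : ∀ u, u₀ ≤ u → 0 < g u := fun u hu => mul_pos (exp_pos u) (hpos _ (hmaps hu))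
  have hgle : ∀ u, u₀ ≤ u → g u ≤ K * (u - u₀ + 1) := fun u hu => calc
    g u ≤ exp u * (K * (b - (b - exp (-u)))) :=
      mul_le_mul_of_nonneg_left (hle _ (hmaps hu)) (exp_pos u).le
    _ = K := by rw [sub_sub_cancel, mul_left_comm, ← exp_add, add_neg_cancel, exp_zero, mul_one]
    _ ≤ K * (u - u₀ + 1) := le_mul_of_one_le_right hK.le (by linarith)
  obtain ⟨v, hv0, hv⟩ := exists_hasDerivAt_of_pos_of_le_linear hg hgpos hgle
  refine ⟨fun t => b - exp (-v t), by simp only [hv0, hexp₀, sub_sub_cancel], fun t ht => ?_⟩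
  obtain ⟨hvt, hvd⟩ := hv t ht
  refine ⟨hmaps hvt, ?_⟩
  have hrate : -(exp ((-v) t) * -g (v t)) = G (b - exp (-v t)) := by
    simp only [g, Pi.neg_apply, mul_neg, neg_neg, ← mul_assoc, ← exp_add, neg_add_cancel, exp_zero,
      one_mul]
  exact hrate ▸ (hvd.neg.exp).const_sub b

theorem ODE_solution_unique_Ici_of_locallyLipschitzOn {E : Type*} [NormedAddCommGroup E]
    [NormedSpace ℝ E] {F : E → E} {s : Set E} (hF : LocallyLipschitzOn s F) {v w : ℝ → E}
    (hv : ∀ t, 0 ≤ t → HasDerivWithinAt v (F (v t)) (Ici 0) t) (hvs : ∀ t, 0 ≤ t → v t ∈ s)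
    (hw : ∀ t, 0 ≤ t → HasDerivWithinAt w (F (w t)) (Ici 0) t) (hws : ∀ t, 0 ≤ t → w t ∈ s)
    (h0 : v 0 = w 0) : EqOn v w (Ici 0) := by
  intro t ht
  have hcont : ∀ f : ℝ → E, (∀ t, 0 ≤ t → HasDerivWithinAt f (F (f t)) (Ici 0) t) →
      ContinuousOn f (Icc 0 t) := fun f hf s hs =>
    (hf s hs.1).continuousWithinAt.mono Icc_subset_Ici_self
  set K := v '' Icc 0 t ∪ w '' Icc 0 t
  have hK : IsCompact K :=
    (isCompact_Icc.image_of_continuousOn (hcont v hv)).union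
      (isCompact_Icc.image_of_continuousOn (hcont w hw))
  have hKs : K ⊆ s := union_subset (image_subset_iff.2 fun u hu => hvs u hu.1)
    (image_subset_iff.2 fun u hu => hws u hu.1)
  obtain ⟨C, hC⟩ := (hF.mono hKs).exists_lipschitzOnWith_of_compact hK
  refine ODE_solution_unique_of_mem_Icc_right (s := fun _ => K) (fun _ _ => hC) (hcont v hv)
    (fun u hu => (hv u hu.1).mono (Ici_subset_Ici.2 hu.1))
    (fun u hu => Or.inl (mem_image_of_mem v (Ico_subset_Icc_self hu))) (hcont w hw)
    (fun u hu => (hw u hu.1).mono (Ici_subset_Ici.2 hu.1))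
    (fun u hu => Or.inr (mem_image_of_mem w (Ico_subset_Icc_self hu))) h0 ⟨ht, le_rfl⟩

section Riccati

variable {φ : ℝ → ℝ} {L q p b : ℝ}

theorem exists_riccati_solution_of_forall_lt (hconv : ConvexOn ℝ (Ici L) φ)
    (hdiff : DifferentiableOn ℝ φ (Ici L)) (hLp : L ≤ p) (hlt : ∀ y, p ≤ y → φ y < q) :
    ∃ v : ℝ → ℝ, v 0 = p ∧ ∀ t, 0 ≤ t → p ≤ v t ∧ HasDerivAt v (q - φ (v t)) t := by
  set d := derivWithin φ (Ici L) p
  refine exists_hasDerivAt_of_pos_of_le_linear (g := fun y => q - φ y)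
    (continuousOn_const.sub (hdiff.continuousOn.mono (Ici_subset_Ici.2 hLp)))
    (fun y hy => sub_pos.2 (hlt y hy)) (C := max (q - φ p) (-d)) fun y hy => ?_
  have htangent := hconv.add_mul_sub_le_of_hasDerivWithinAt hLp (hLp.trans hy)
    (hdiff p hLp).hasDerivWithinAt
  have h₁ : q - φ p ≤ max (q - φ p) (-d) := le_max_left _ _
  have h₂ : -d * (y - p) ≤ max (q - φ p) (-d) * (y - p) :=
    mul_le_mul_of_nonneg_right (le_max_right _ _) (sub_nonneg.2 hy)
  linarith

theorem exists_riccati_solution_of_lt_of_eq (hconv : ConvexOn ℝ (Ici L) φ)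
    (hdiff : DifferentiableOn ℝ φ (Ici L)) (hLp : L ≤ p) (hpb : p < b) (hb : φ b = q)
    (hlt : ∀ y ∈ Ico p b, φ y < q) :
    ∃ v : ℝ → ℝ, v 0 = p ∧ ∀ t, 0 ≤ t → v t ∈ Ico p b ∧ HasDerivAt v (q - φ (v t)) t := by
  have hLb : L ≤ b := hLp.trans hpb.le
  refine exists_hasDerivAt_of_pos_of_le_mul_sub (G := fun y => q - φ y) hpb
    (continuousOn_const.sub (hdiff.continuousOn.mono fun y hy => hLp.trans hy.1))
    (fun y hy => sub_pos.2 (hlt y hy)) (K := derivWithin φ (Ici L) b) fun y hy => ?_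
  have := hconv.add_mul_sub_le_of_hasDerivWithinAt hLb (hLp.trans hy.1)
    (hdiff b hLb).hasDerivWithinAt
  linarith

theorem exists_riccati_solution_of_eq_of_gt (hconv : ConvexOn ℝ (Ici L) φ)
    (hdiff : DifferentiableOn ℝ φ (Ici L)) (hLb : L ≤ b) (hbp : b < p) (hb : φ b = q)
    (hgt : ∀ y ∈ Ioc b p, q < φ y) :
    ∃ v : ℝ → ℝ, v 0 = p ∧ ∀ t, 0 ≤ t → v t ∈ Ioc b p ∧ HasDerivAt v (q - φ (v t)) t := by
  have hLp : L ≤ p := hLb.trans hbp.le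
  have hneg : MapsTo (fun y => -y) (Ico (-p) (-b)) (Ioc b p) := fun y hy =>
    ⟨lt_neg_of_lt_neg hy.2, neg_le.1 hy.1⟩
  set K := derivWithin φ (Ici L) p
  have hle : ∀ y ∈ Ico (-p) (-b), φ (-y) - q ≤ K * (-b - y) := fun y hy => by
    have hy' := hneg hy
    have hsecant := hconv.secant_mono hLb (hLb.trans hy'.1.le) hLp hy'.1.ne' hbp.ne' hy'.2
    have hslope := hconv.slope_le_of_hasDerivWithinAt hLb hLp hbp (hdiff p hLp).hasDerivWithinAt
    rw [slope_def_field] at hslope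
    have := (div_le_iff₀ (by linarith [hy'.1] : (0 : ℝ) < -y - b)).1 (hsecant.trans hslope)
    linarith
  obtain ⟨w, hw0, hw⟩ := exists_hasDerivAt_of_pos_of_le_mul_sub (G := fun y => φ (-y) - q)
    (neg_lt_neg hbp)
    ((hdiff.continuousOn.comp continuous_neg.continuousOn fun y hy =>
      hLb.trans (hneg hy).1.le).sub continuousOn_const)
    (fun y hy => sub_pos.2 (hgt _ (hneg hy))) hle
  refine ⟨fun t => -w t, by simp [hw0], fun t ht => ⟨hneg (hw t ht).1, ?_⟩⟩
  have hd := (hw t ht).2.neg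
  rwa [neg_sub] at hd

theorem exists_riccati_solution {pq : ℝ} (hconv : ConvexOn ℝ (Ici L) φ)
    (hdiff : DifferentiableOn ℝ φ (Ici L)) (hLpq : L ≤ pq) (hpq : φ pq ≤ q) (hp : pq ≤ p) :
    ∃ v : ℝ → ℝ, v 0 = p ∧ ∀ t, 0 ≤ t → pq ≤ v t ∧ HasDerivAt v (q - φ (v t)) t := by
  have hLp : L ≤ p := hLpq.trans hp
  rcases lt_trichotomy (φ p) q with hlt | heq | hgt
  · by_cases hall : ∀ y, p ≤ y → φ y < q
    · obtain ⟨v, hv0, hv⟩ := exists_riccati_solution_of_forall_lt hconv hdiff hLp hall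
      exact ⟨v, hv0, fun t ht => ⟨hp.trans (hv t ht).1, (hv t ht).2⟩⟩
    push Not at hall
    obtain ⟨y₀, hpy₀, hy₀⟩ := hall
    obtain ⟨b, hb, hφb, hbefore⟩ :=
      (hdiff.continuousOn.mono fun y hy => hLp.trans hy.1).exists_first_eq hlt hy₀ hpy₀
    obtain ⟨v, hv0, hv⟩ := exists_riccati_solution_of_lt_of_eq hconv hdiff hLp hb.1 hφb hbefore
    exact ⟨v, hv0, fun t ht => ⟨hp.trans (hv t ht).1.1, (hv t ht).2⟩⟩
  · exact ⟨fun _ => p, rfl, fun t _ => ⟨hp, by simpa [heq] using hasDerivAt_const t p⟩⟩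
  · obtain ⟨b, hb, hφb, hafter⟩ :=
      (hdiff.continuousOn.mono fun y hy => hLpq.trans hy.1).exists_last_eq hpq hgt hp
    obtain ⟨v, hv0, hv⟩ :=
      exists_riccati_solution_of_eq_of_gt hconv hdiff (hLpq.trans hb.1) hb.2 hφb hafter
    exact ⟨v, hv0, fun t ht => ⟨hb.1.trans (hv t ht).1.1.le, (hv t ht).2⟩⟩

end Riccati

theorem ContinuousOn.csInf_sublevel_mem {φ : ℝ → ℝ} {L q y₀ : ℝ}
    (hφ : ContinuousOn φ (Ici L)) (hy₀ : y₀ ∈ Ici L) (hφy₀ : φ y₀ ≤ q) :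
    sInf {y : ℝ | y ∈ Ici L ∧ φ y ≤ q} ∈ {y : ℝ | y ∈ Ici L ∧ φ y ≤ q} :=
  (hφ.preimage_isClosed_of_isClosed isClosed_Ici isClosed_Iic).csInf_mem ⟨y₀, hy₀, hφy₀⟩
    ⟨L, fun _ hy => hy.1⟩

/-- Global existence and uniqueness for the generalized Riccati ODE started at or above p_q. -/
theorem stmt_6 (L : ℝ) (hL : L ≤ 0) (φ : ℝ → ℝ)
    (hconv : ConvexOn ℝ (Set.Ici L) φ)
    (hC1 : ContDiffOn ℝ 1 φ (Set.Ici L))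
    (hφ0 : φ 0 = 0) (q : ℝ) (hq : 0 ≤ q)
    (pq : ℝ) (hpq : pq = sInf {y : ℝ | y ∈ Set.Ici L ∧ φ y ≤ q}) :
    ∀ p : ℝ, pq ≤ p →
      ∃ v : ℝ → ℝ,
        ((∀ t : ℝ, 0 ≤ t → pq ≤ v t) ∧ v 0 = p ∧
          (∀ t : ℝ, 0 ≤ t → HasDerivWithinAt v (q - φ (v t)) (Set.Ici 0) t)) ∧
        (∀ w : ℝ → ℝ,
          ((∀ t : ℝ, 0 ≤ t → pq ≤ w t) ∧ w 0 = p ∧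
            (∀ t : ℝ, 0 ≤ t → HasDerivWithinAt w (q - φ (w t)) (Set.Ici 0) t)) →
          ∀ t : ℝ, 0 ≤ t → w t = v t) := by
  intro p hp
  have hdiff : DifferentiableOn ℝ φ (Ici L) := hC1.differentiableOn one_ne_zero
  obtain ⟨hLpq, hφpq⟩ : L ≤ pq ∧ φ pq ≤ q :=
    hpq ▸ hdiff.continuousOn.csInf_sublevel_mem (mem_Ici.2 hL) (hφ0.trans_le hq)
  obtain ⟨v, hv0, hv⟩ := exists_riccati_solution hconv hdiff hLpq hφpq hp
  have hvsol : ∀ t, 0 ≤ t → HasDerivWithinAt v (q - φ (v t)) (Ici 0) t := fun t ht =>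
    (hv t ht).2.hasDerivWithinAt
  refine ⟨v, ⟨fun t ht => (hv t ht).1, hv0, hvsol⟩, fun w ⟨hw, hw0, hwsol⟩ t ht => ?_⟩
  have hlip : LocallyLipschitzOn (Ici L) fun y => q - φ y :=
    (contDiffOn_const.sub hC1).locallyLipschitzOn (convex_Ici L)
  exact ODE_solution_unique_Ici_of_locallyLipschitzOn hlip hwsol (fun s hs => hLpq.trans (hw s hs))
    hvsol (fun s hs => hLpq.trans (hv s hs).1) (hw0.trans hv0.symm) ht
end

section
/- Let L ∈ ℝ with L ≤ 0 and let φ : [L, ∞) → ℝ be convex, continuously differentiable and satisfy φ(0) = 0. Fix q ≥ 0 and set p_q := inf{ y ∈ [L, ∞) : φ(y) ≤ q }, and suppose p_q > L. Let p ∈ [L, p_q). Then φ(y) > q for all y ∈ [L, p_q), the quantity T* := ∫_L^p dy/(φ(y) − q) is finite and strictly positive (with T* = 0 when p = L understood as the empty integral), and: (a) there exists a strictly decreasing solution v : [0, T*] → [L, p] of v′(t) = q − φ(v(t)), v(0) = p, with v(T*) = L; (b) for every T > T* there is no differentiable function v : [0, T] → [L, ∞) with v(0) = p satisfying v′(t)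 = q − φ(v(t)) for all t ∈ [0, T]. Consequently, sup{ T ≥ 0 : a solution with values in [L, ∞) exists on [0, T] } = ∫_L^p dy/(φ(y) − q). -/
/-!
Since `φ > q` on `[L, p_q)` by the definition of `p_q`, the equation `v' = -(φ v - q)` is
separable on `[L, p]` with a positive right-hand side `f = φ - q`. The travel time
`F x = ∫_L^x dy / f y` is strictly increasing, and `v t = F⁻¹ (F p - t)` solves the equation
until it hits `L` at time `F p = T*`. Conversely, a solution staying above `L` can never rise
above `p`, since it decreases whenever it sits at level `p`; then `F (v t) + t` is constant, so
`T = F p - F (v T) ≤ T*`.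
-/

open Set Filter

theorem surjective_of_forall_hasDerivAt_of_le {F F' : ℝ → ℝ} {m : ℝ} (hm : 0 < m)
    (hF : ∀ x, HasDerivAt F (F' x) x) (hmF' : ∀ x, m ≤ F' x) : Function.Surjective F := by
  have hdiff : Differentiable ℝ F := fun x => (hF x).differentiableAt
  have hgrowth : ∀ ⦃x y⦄, x ≤ y → m * (y - x) ≤ F y - F x :=
    mul_sub_le_image_sub_of_le_deriv hdiff fun x => (hF x).deriv ▸ hmF' x
  refine hdiff.continuous.surjective ?_ ?_
  · refine tendsto_atTop_mono' atTop ?_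
      (tendsto_atTop_add_const_left _ (F 0) (tendsto_id.const_mul_atTop hm))
    filter_upwards [eventually_ge_atTop 0] with x hx
    dsimp only [id]
    linarith [hgrowth hx]
  · refine tendsto_atBot_mono' atBot ?_
      (tendsto_atBot_add_const_left _ (F 0) (tendsto_id.const_mul_atBot hm))
    filter_upwards [eventually_le_atBot 0] with x hx
    dsimp only [id]
    linarith [hgrowth hx]

theorem HasDerivWithinAt.Ici_of_Icc {w : ℝ → ℝ} {w' s t S : ℝ} (ht : t ∈ Ico s S)
    (hw : HasDerivWithinAt w w' (Icc s S) t) : HasDerivWithinAt w w' (Ici t) t :=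
  hw.mono_of_mem_nhdsWithin <|
    mem_of_superset (Icc_mem_nhdsGE ht.2) (Icc_subset_Icc_left ht.1)

section SeparableODE

variable {f : ℝ → ℝ} {a b : ℝ}

noncomputable def recipExtend (hab : a ≤ b) (f : ℝ → ℝ) : ℝ → ℝ :=
  IccExtend hab fun y => 1 / f y

/-- The time a solution of `v' = -f v` needs to descend from `x ∈ [a, b]` to `a`. Extending
`1 / f` by its boundary values makes it an increasing homeomorphism of `ℝ`. -/
noncomputable def travelTime (hab : a ≤ b) (f : ℝ → ℝ) (x : ℝ) : ℝ :=
  ∫ y in a..x, recipExtend hab f y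

variable (hab : a ≤ b)

theorem recipExtend_of_mem {y : ℝ} (hy : y ∈ Icc a b) : recipExtend hab f y = 1 / f y :=
  IccExtend_of_mem hab _ hy

theorem travelTime_left : travelTime hab f a = 0 :=
  intervalIntegral.integral_same

theorem travelTime_right : travelTime hab f b = ∫ y in a..b, 1 / f y :=
  intervalIntegral.integral_congr fun _ hy => recipExtend_of_mem hab (uIcc_of_le hab ▸ hy)

variable (hf : ContinuousOn f (Icc a b)) (hpos : ∀ y ∈ Icc a b, 0 < f y)
include hf hpos

theorem continuous_recipExtend : Continuous (recipExtend hab f) :=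
  continuous_IccExtend_iff.2 <|
    continuous_const.div (continuousOn_iff_continuous_domRestrict.1 hf) fun y => (hpos y y.2).ne'

theorem exists_pos_le_recipExtend : ∃ m, 0 < m ∧ ∀ y, m ≤ recipExtend hab f y := by
  obtain ⟨z, -, hz⟩ := isCompact_univ.exists_isMinOn ⟨⟨a, left_mem_Icc.2 hab⟩, trivial⟩
    (continuous_IccExtend_iff.1 (continuous_recipExtend hab hf hpos)).continuousOn
  exact ⟨1 / f z, one_div_pos.2 (hpos z z.2), fun y => hz (mem_univ (projIcc a b hab y))⟩

theorem hasDerivAt_travelTime (x : ℝ) : HasDerivAt (travelTime hab f) (recipExtend hab f x) x :=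
  let hcont := continuous_recipExtend hab hf hpos
  intervalIntegral.integral_hasDerivAt_right (hcont.intervalIntegrable _ _)
    (hcont.stronglyMeasurableAtFilter _ _) hcont.continuousAt

theorem travelTime_strictMono : StrictMono (travelTime hab f) := by
  obtain ⟨m, hm, hmle⟩ := exists_pos_le_recipExtend hab hf hpos
  exact strictMono_of_deriv_pos fun x =>
    (hasDerivAt_travelTime hab hf hpos x).deriv ▸ hm.trans_le (hmle x)

theorem travelTime_surjective : Function.Surjective (travelTime hab f) := by
  obtain ⟨m, hm, hmle⟩ := exists_pos_le_recipExtend hab hf hpos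
  exact surjective_of_forall_hasDerivAt_of_le hm (hasDerivAt_travelTime hab hf hpos) hmle

theorem travelTime_nonneg : 0 ≤ travelTime hab f b :=
  travelTime_left hab (f := f) ▸ (travelTime_strictMono hab hf hpos).monotone hab

theorem exists_strictAntiOn_solution :
    ∃ v : ℝ → ℝ, StrictAntiOn v (Icc 0 (travelTime hab f b)) ∧
      (∀ t ∈ Icc 0 (travelTime hab f b), v t ∈ Icc a b) ∧
      v 0 = b ∧ v (travelTime hab f b) = a ∧
      ∀ t ∈ Icc 0 (travelTime hab f b),
        HasDerivWithinAt v (-f (v t)) (Icc 0 (travelTime hab f b)) t := by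
  set T := travelTime hab f b
  let e := (travelTime_strictMono hab hf hpos).orderIsoOfSurjective _
    (travelTime_surjective hab hf hpos)
  have he : ∀ x, e.symm (travelTime hab f x) = x := e.symm_apply_apply
  have hmem : ∀ t ∈ Icc 0 T, e.symm (T - t) ∈ Icc a b := fun t ht =>
    ⟨he a ▸ e.symm.monotone (by rw [travelTime_left]; linarith [ht.2]),
      he b ▸ e.symm.monotone (by linarith [ht.1])⟩
  refine ⟨fun t => e.symm (T - t), fun s _ t _ hst => e.symm.strictMono (by linarith),
    hmem, by simpa using he b, by simpa [travelTime_left] using he a, fun t ht => ?_⟩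
  have hinv : HasDerivAt e.symm (f (e.symm (T - t))) (T - t) := by
    have hrecip : recipExtend hab f (e.symm (T - t)) = 1 / f (e.symm (T - t)) :=
      recipExtend_of_mem hab (hmem t ht)
    have := HasDerivAt.of_local_left_inverse e.symm.continuous.continuousAt
      (hasDerivAt_travelTime hab hf hpos _)
      (hrecip ▸ one_div_ne_zero (hpos _ (hmem t ht)).ne')
      (Eventually.of_forall e.apply_symm_apply)
    rwa [hrecip, one_div, inv_inv] at this
  simpa [Function.comp_def] using (hinv.comp t ((hasDerivAt_id t).const_sub T)).hasDerivWithinAt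

theorem le_travelTime_of_solution {w : ℝ → ℝ} {S : ℝ} (hS : 0 ≤ S)
    (hwa : ∀ t ∈ Icc 0 S, a ≤ w t) (hw0 : w 0 = b)
    (hw : ∀ t ∈ Icc 0 S, HasDerivWithinAt w (-f (w t)) (Icc 0 S) t) :
    S ≤ travelTime hab f b := by
  have hw' : ∀ t ∈ Ico 0 S, HasDerivWithinAt w (-f (w t)) (Ici t) t := fun t ht =>
    (hw t (Ico_subset_Icc_self ht)).Ici_of_Icc ht
  have hwcont : ContinuousOn w (Icc 0 S) := fun t ht => (hw t ht).continuousWithinAt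
  -- `w` cannot cross the level `b`, where it is strictly decreasing
  have hwb : ∀ t ∈ Icc 0 S, w t ≤ b := fun t ht =>
    image_le_of_deriv_right_lt_deriv_boundary' hwcont hw' hw0.le continuousOn_const
      (fun _ _ => hasDerivWithinAt_const _ _ _)
      (fun _ _ hwt => by simpa [hwt] using hpos b ⟨hab, le_rfl⟩) ht
  have hTravel : Continuous (travelTime hab f) :=
    continuous_iff_continuousAt.2 fun x => (hasDerivAt_travelTime hab hf hpos x).continuousAt
  -- elapsed time plus remaining travel time is conserved along the solution
  have hconst := constant_of_has_deriv_right_zero (f := fun t => travelTime hab f (w t) + t)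
    ((hTravel.comp_continuousOn hwcont).add continuousOn_id) (fun t ht => ?_) S ⟨hS, le_rfl⟩
  · have hwS : travelTime hab f a ≤ travelTime hab f (w S) :=
      (travelTime_strictMono hab hf hpos).monotone (hwa S ⟨hS, le_rfl⟩)
    simp only [hw0, add_zero] at hconst
    linarith [travelTime_left hab (f := f)]
  · have hwt : w t ∈ Icc a b :=
      ⟨hwa t (Ico_subset_Icc_self ht), hwb t (Ico_subset_Icc_self ht)⟩
    have := ((hasDerivAt_travelTime hab hf hpos (w t)).comp_hasDerivWithinAt t (hw' t ht)).add
      (hasDerivWithinAt_id t _)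
    rwa [recipExtend_of_mem hab hwt, one_div, mul_neg, inv_mul_cancel₀ (hpos _ hwt).ne',
      neg_add_cancel] at this

end SeparableODE

theorem stmt_7_general (L : ℝ) (φ : ℝ → ℝ)
    (hC1 : ContDiffOn ℝ 1 φ (Set.Ici L))
    (q : ℝ)
    (pq : ℝ) (hpq : pq = sInf {y : ℝ | y ∈ Set.Ici L ∧ φ y ≤ q})
    (p : ℝ) (hp : p ∈ Set.Ico L pq)
    (Tstar : ℝ) (hT : Tstar = ∫ y in L..p, 1 / (φ y - q)) :
    (∀ y ∈ Set.Ico L pq, q < φ y) ∧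
    IntervalIntegrable (fun y => 1 / (φ y - q)) MeasureTheory.volume L p ∧
    (L < p → 0 < Tstar) ∧
    (∃ v : ℝ → ℝ,
      StrictAntiOn v (Set.Icc 0 Tstar) ∧
      (∀ t ∈ Set.Icc (0:ℝ) Tstar, v t ∈ Set.Icc L p) ∧
      v 0 = p ∧ v Tstar = L ∧
      (∀ t ∈ Set.Icc (0:ℝ) Tstar, HasDerivWithinAt v (q - φ (v t)) (Set.Icc 0 Tstar) t)) ∧
    (∀ T : ℝ, Tstar < T →
      ¬ ∃ v : ℝ → ℝ,
          (∀ t ∈ Set.Icc (0:ℝ) T, L ≤ v t) ∧ v 0 = p ∧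
          (∀ t ∈ Set.Icc (0:ℝ) T, HasDerivWithinAt v (q - φ (v t)) (Set.Icc 0 T) t)) ∧
    sSup {T : ℝ | 0 ≤ T ∧ ∃ v : ℝ → ℝ,
        (∀ t ∈ Set.Icc (0:ℝ) T, L ≤ v t) ∧ v 0 = p ∧
        (∀ t ∈ Set.Icc (0:ℝ) T, HasDerivWithinAt v (q - φ (v t)) (Set.Icc 0 T) t)} = Tstar := by
  obtain ⟨hLp, hppq⟩ := hp
  have hgt : ∀ y ∈ Ico L pq, q < φ y := fun y hy => not_le.1 fun hle =>
    notMem_of_lt_csInf (hy.2.trans_eq hpq) ⟨L, fun _ hz => hz.1⟩ ⟨hy.1, hle⟩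
  have hf : ContinuousOn (fun y => φ y - q) (Icc L p) :=
    (hC1.continuousOn.mono Icc_subset_Ici_self).sub continuousOn_const
  have hpos : ∀ y ∈ Icc L p, 0 < φ y - q := fun y hy =>
    sub_pos.2 (hgt y ⟨hy.1, hy.2.trans_lt hppq⟩)
  obtain rfl : Tstar = travelTime hLp (fun y => φ y - q) p :=
    hT.trans (travelTime_right hLp).symm
  have hTnonneg := travelTime_nonneg hLp hf hpos
  have hno : ∀ T, travelTime hLp (fun y => φ y - q) p < T → ¬ ∃ v : ℝ → ℝ,
      (∀ t ∈ Icc (0:ℝ) T, L ≤ v t) ∧ v 0 = p ∧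
      ∀ t ∈ Icc (0:ℝ) T, HasDerivWithinAt v (q - φ (v t)) (Icc 0 T) t := by
    rintro T hT ⟨v, hvL, hv0, hv⟩
    exact hT.not_ge (le_travelTime_of_solution hLp hf hpos (hTnonneg.trans hT.le) hvL hv0
      (by simpa using hv))
  obtain ⟨v, hv_anti, hv_mem, hv0, hv_end, hv⟩ := exists_strictAntiOn_solution hLp hf hpos
  simp only [neg_sub] at hv
  refine ⟨hgt, ?_, fun hLp' => ?_, ⟨v, hv_anti, hv_mem, hv0, hv_end, hv⟩, hno, ?_⟩
  · exact (continuousOn_const.div hf fun y hy => (hpos y hy).ne').intervalIntegrable_of_Icc hLp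
  · exact travelTime_left hLp (f := fun y => φ y - q) ▸ travelTime_strictMono hLp hf hpos hLp'
  · refine IsGreatest.csSup_eq ⟨?_, fun T hT => not_lt.1 fun h => hno T h hT.2⟩
    exact ⟨hTnonneg, v, fun t ht => (hv_mem t ht).1, hv0, hv⟩

/-- Explosion-time formula for the generalized Riccati ODE started below p_q. -/
theorem stmt_7 (L : ℝ) (hL : L ≤ 0) (φ : ℝ → ℝ)
    (hconv : ConvexOn ℝ (Set.Ici L) φ)
    (hC1 : ContDiffOn ℝ 1 φ (Set.Ici L))
    (hφ0 : φ 0 = 0) (q : ℝ) (hq : 0 ≤ q)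
    (pq : ℝ) (hpq : pq = sInf {y : ℝ | y ∈ Set.Ici L ∧ φ y ≤ q})
    (hpqL : L < pq) (p : ℝ) (hp : p ∈ Set.Ico L pq)
    (Tstar : ℝ) (hT : Tstar = ∫ y in L..p, 1 / (φ y - q)) :
    (∀ y ∈ Set.Ico L pq, q < φ y) ∧
    IntervalIntegrable (fun y => 1 / (φ y - q)) MeasureTheory.volume L p ∧
    (L < p → 0 < Tstar) ∧
    (∃ v : ℝ → ℝ,
      StrictAntiOn v (Set.Icc 0 Tstar) ∧
      (∀ t ∈ Set.Icc (0:ℝ) Tstar, v t ∈ Set.Icc L p) ∧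
      v 0 = p ∧ v Tstar = L ∧
      (∀ t ∈ Set.Icc (0:ℝ) Tstar, HasDerivWithinAt v (q - φ (v t)) (Set.Icc 0 Tstar) t)) ∧
    (∀ T : ℝ, Tstar < T →
      ¬ ∃ v : ℝ → ℝ,
          (∀ t ∈ Set.Icc (0:ℝ) T, L ≤ v t) ∧ v 0 = p ∧
          (∀ t ∈ Set.Icc (0:ℝ) T, HasDerivWithinAt v (q - φ (v t)) (Set.Icc 0 T) t)) ∧
    sSup {T : ℝ | 0 ≤ T ∧ ∃ v : ℝ → ℝ,
        (∀ t ∈ Set.Icc (0:ℝ) T, L ≤ v t) ∧ v 0 = p ∧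
        (∀ t ∈ Set.Icc (0:ℝ) T, HasDerivWithinAt v (q - φ (v t)) (Set.Icc 0 T) t)} = Tstar :=
  stmt_7_general L φ hC1 q pq hpq p hp Tstar hT
end
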